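/- arXiv:1608.06691 — 4 statements merged into one kernel-verified Lean document; each statement's English description precedes it below -/
import Mathlib

section
/- Let Σ be an n×n signature matrix with finite value val(Σ) and a valid offset pair (c;d). Fix a row index l. If one replaces every entry σ_{lj} of row l by a new entry σ̄_{lj} satisfying σ̄_{lj} < d_j - c_l for all j, then the value of the resulting signature matrix Σ̄ satisfies val(Σ̄) < val(Σ). -/
/-!
An offset pair bounds every transversal sum of `Σ` by `∑ (d (p i) - c i) = ∑ d - ∑ c`, with
equality on the tight transversal, so `val(Σ) = ∑ d - ∑ c`. Every transversal of `Σ̄` meets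
row `l` exactly once, in an entry strictly below its bound, while its other entries still obey
their bounds; hence each transversal sum of `Σ̄`, and so `val(Σ̄)`, is strictly below `∑ d - ∑ c`.
-/

/-- Transversal value of a signature matrix (entries in `ℤ ∪ {-∞}` = `WithBot ℤ`). -/
def tval {n : ℕ} (A : Matrix (Fin n) (Fin n) (WithBot ℤ)) (p : Equiv.Perm (Fin n)) : WithBot ℤ :=
  ∑ i, A i (p i)

/-- The value `val(Σ)`: the maximum transversal sum. -/
noncomputable def sigVal {n : ℕ} (A : Matrix (Fin n) (Fin n) (WithBot ℤ)) : WithBot ℤ :=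
  Finset.univ.sup fun p : Equiv.Perm (Fin n) => tval A p

open Finset

theorem WithBot.sum_lt_coe_sum {ι M : Type*} [AddCommMonoid M] [PartialOrder M]
    [IsOrderedCancelAddMonoid M] {s : Finset ι} {f : ι → WithBot M} {g : ι → M}
    (hle : ∀ i ∈ s, f i ≤ g i) {a : ι} (ha : a ∈ s) (hlt : f a < g a) :
    ∑ i ∈ s, f i < ↑(∑ i ∈ s, g i) := by
  classical
  rw [← add_sum_erase s f ha, ← add_sum_erase s g ha, WithBot.coe_add, WithBot.coe_sum]
  calc f a + ∑ i ∈ s.erase a, f i ≤ f a + ∑ i ∈ s.erase a, (g i : WithBot M) :=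
        add_le_add_right (sum_le_sum fun i hi => hle i (mem_of_mem_erase hi)) _
    _ < g a + ∑ i ∈ s.erase a, (g i : WithBot M) := by
        rw [← WithBot.coe_sum]
        exact WithBot.add_lt_add_right WithBot.coe_ne_bot hlt

theorem Equiv.Perm.sum_sub_comp {ι G : Type*} [Fintype ι] [AddCommGroup G] (c d : ι → G)
    (p : Equiv.Perm ι) : ∑ i, (d (p i) - c i) = ∑ i, d i - ∑ i, c i := by
  rw [sum_sub_distrib, Equiv.sum_comp p d]

section Offsets

variable {n : ℕ} (c d : Fin n → ℤ)

theorem tval_le_of_le_offsets {A : Matrix (Fin n) (Fin n) (WithBot ℤ)}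
    (hle : ∀ i j, A i j ≤ ((d j - c i : ℤ) : WithBot ℤ)) (p : Equiv.Perm (Fin n)) :
    tval A p ≤ ((∑ i, d i - ∑ i, c i : ℤ) : WithBot ℤ) := by
  rw [← p.sum_sub_comp, WithBot.coe_sum]
  exact sum_le_sum fun i _ => hle i (p i)

theorem tval_eq_of_tight {A : Matrix (Fin n) (Fin n) (WithBot ℤ)} {T : Equiv.Perm (Fin n)}
    (hT : ∀ i, A i (T i) = ((d (T i) - c i : ℤ) : WithBot ℤ)) :
    tval A T = ((∑ i, d i - ∑ i, c i : ℤ) : WithBot ℤ) := by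
  rw [← T.sum_sub_comp, WithBot.coe_sum]
  exact sum_congr rfl fun i _ => hT i

theorem sigVal_eq_of_offsets {A : Matrix (Fin n) (Fin n) (WithBot ℤ)}
    (hle : ∀ i j, A i j ≤ ((d j - c i : ℤ) : WithBot ℤ)) {T : Equiv.Perm (Fin n)}
    (hT : ∀ i, A i (T i) = ((d (T i) - c i : ℤ) : WithBot ℤ)) :
    sigVal A = ((∑ i, d i - ∑ i, c i : ℤ) : WithBot ℤ) :=
  le_antisymm (Finset.sup_le fun p _ => tval_le_of_le_offsets c d hle p)
    (tval_eq_of_tight c d hT ▸ le_sup (mem_univ T))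

theorem sigVal_lt_of_row_lt {B : Matrix (Fin n) (Fin n) (WithBot ℤ)} {l : Fin n}
    (hle : ∀ i, i ≠ l → ∀ j, B i j ≤ ((d j - c i : ℤ) : WithBot ℤ))
    (hlt : ∀ j, B l j < ((d j - c l : ℤ) : WithBot ℤ)) :
    sigVal B < ((∑ i, d i - ∑ i, c i : ℤ) : WithBot ℤ) := by
  refine (Finset.sup_lt_iff (WithBot.bot_lt_coe _)).2 fun p _ => ?_
  rw [← p.sum_sub_comp]
  refine WithBot.sum_lt_coe_sum (fun i _ => ?_) (mem_univ l) (hlt (p l))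
  rcases eq_or_ne i l with rfl | hi
  · exact (hlt (p i)).le
  · exact hle i hi (p i)

end Offsets

theorem stmt1_general {n : ℕ} (A B : Matrix (Fin n) (Fin n) (WithBot ℤ))
    (c d : Fin n → ℤ)
    (hle : ∀ i j, A i j ≤ ((d j - c i : ℤ) : WithBot ℤ))
    (T : Equiv.Perm (Fin n))
    (hT : ∀ i, A i (T i) = ((d (T i) - c i : ℤ) : WithBot ℤ))
    (l : Fin n)
    (hB : ∀ i, i ≠ l → B i = A i)
    (hBl : ∀ j, B l j < ((d j - c l : ℤ) : WithBot ℤ)) :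
    sigVal B < sigVal A := by
  rw [sigVal_eq_of_offsets c d hle hT]
  exact sigVal_lt_of_row_lt c d (fun i hi j => (hB i hi).symm ▸ hle i j) hBl

/-- If row `l` of a signature matrix `A` with finite value and valid offset
pair `(c; d)` is replaced by entries strictly below `d j - c l`, the value of
the resulting signature matrix `B` strictly decreases. -/
theorem stmt1 {n : ℕ} (A B : Matrix (Fin n) (Fin n) (WithBot ℤ))
    (c d : Fin n → ℤ) (hc : ∀ i, 0 ≤ c i)
    (hle : ∀ i j, A i j ≤ ((d j - c i : ℤ) : WithBot ℤ))
    (T : Equiv.Perm (Fin n))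
    (hT : ∀ i, A i (T i) = ((d (T i) - c i : ℤ) : WithBot ℤ))
    (hfin : sigVal A ≠ ⊥)
    (l : Fin n)
    (hB : ∀ i, i ≠ l → B i = A i)
    (hBl : ∀ j, B l j < ((d j - c l : ℤ) : WithBot ℤ)) :
    sigVal B < sigVal A :=
  stmt1_general A B c d hle T hT l hB hBl
end

section
/- (Griewank's Lemma) Let w be a smooth function of t, of variables x_1(t),…,x_n(t), and of finitely many of their derivatives x_j^{(k)}. Suppose w does not depend on any derivative x_j^{(k)} with k > q (i.e., ∂w/∂x_j^{(k)} ≡ 0 for k > q). Then for every p ≥ 0, the p-th total time derivative w^{(p)} satisfies ∂w^{(p)}/∂x_j^{(q+p)} = ∂w/∂x_j^{(q)}, where derivatives x_j^{(k)} are treated as independent formal variables and d/dt acts by the chain rule sending x_j^{(k)} to x_j^{(k+1)}. -/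
/-!
The derivation `D` sends `x_j^{(k)}` to `x_j^{(k+1)}`, so it satisfies the commutation relation
`[∂/∂x_j^{(k+1)}, D] = ∂/∂x_j^{(k)}`. Applied to `D^p w` with `k = q + p` this gives
`∂(D^{p+1} w)/∂x_j^{(q+p+1)} = D (∂(D^p w)/∂x_j^{(q+p+1)}) + ∂(D^p w)/∂x_j^{(q+p)}`, and the first term
vanishes because each application of `D` raises the order of `w` in `x_j` by at most one.
-/

open MvPolynomial

/-- Differential polynomials in the formal variables `t` (= `none`) and
`x_j^{(k)}` (= `some (j, k)`), with real coefficients. -/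
abbrev DPoly (n : ℕ) := MvPolynomial (Option (Fin n × ℕ)) ℝ

/-- The formal variable `x_j^{(k)}`. -/
noncomputable def Xv {n : ℕ} (j : Fin n) (k : ℕ) : DPoly n := X (some (j, k))

/-- The total time derivative operator `D`, acting by the chain rule:
`D w = ∂w/∂t + ∑_{j,k} (∂w/∂x_j^{(k)}) · x_j^{(k+1)}`. -/
noncomputable def Dop {n : ℕ} : DPoly n → DPoly n :=
  MvPolynomial.mkDerivation ℝ fun v : Option (Fin n × ℕ) =>
    match v with
    | none => (1 : DPoly n)
    | some (j, k) => Xv j (k + 1)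

namespace MvPolynomial

section CommSemiring

variable (R ι : Type*) [CommSemiring R]

noncomputable def totalDeriv :
    Derivation R (MvPolynomial (Option (ι × ℕ)) R) (MvPolynomial (Option (ι × ℕ)) R) :=
  mkDerivation R fun v : Option (ι × ℕ) =>
    match v with
    | none => 1
    | some (j, k) => X (some (j, k + 1))

variable {R ι}

@[simp]
lemma totalDeriv_X_none : totalDeriv R ι (X none) = 1 := mkDerivation_X _ _ _

@[simp]
lemma totalDeriv_X_some (j : ι) (k : ℕ) :
    totalDeriv R ι (X (some (j, k))) = X (some (j, k + 1)) := mkDerivation_X _ _ _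

end CommSemiring

variable {R ι : Type*} [CommRing R]

lemma commutator_pderiv_succ_totalDeriv (j : ι) (k : ℕ) :
    ⁅(pderiv (some (j, k + 1)) : Derivation R (MvPolynomial (Option (ι × ℕ)) R) _),
      totalDeriv R ι⁆ = pderiv (some (j, k)) := by
  classical
  refine derivation_ext fun v => ?_
  rcases v with _ | ⟨i, m⟩ <;>
    simp [Derivation.commutator_apply, pderiv_X, Pi.single_apply, apply_ite]
  split_ifs <;> simp_all

lemma pderiv_succ_totalDeriv (j : ι) (k : ℕ) (w : MvPolynomial (Option (ι × ℕ)) R) :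
    pderiv (some (j, k + 1)) (totalDeriv R ι w) =
      totalDeriv R ι (pderiv (some (j, k + 1)) w) + pderiv (some (j, k)) w := by
  rw [← commutator_pderiv_succ_totalDeriv j k, Derivation.commutator_apply, add_sub_cancel]

lemma pderiv_totalDeriv_iterate_eq_zero {w : MvPolynomial (Option (ι × ℕ)) R} {j : ι} {q : ℕ}
    (hq : ∀ k, q < k → pderiv (some (j, k)) w = 0) (p : ℕ) :
    ∀ k, q + p < k → pderiv (some (j, k)) ((totalDeriv R ι)^[p] w) = 0 := by
  induction p with
  | zero => simpa using hq
  | succ p ih =>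
    rintro (_ | k) hk
    · omega
    rw [Function.iterate_succ_apply', pderiv_succ_totalDeriv, ih (k + 1) (by omega),
      ih k (by omega), map_zero, add_zero]

end MvPolynomial

lemma Dop_eq_totalDeriv {n : ℕ} : (Dop : DPoly n → DPoly n) = ⇑(totalDeriv ℝ (Fin n)) := by
  unfold Dop totalDeriv
  congr 2
  funext v
  rcases v with _ | ⟨j, k⟩ <;> rfl

/-- **Griewank's Lemma.** If `w` does not depend on any derivative `x_j^{(k)}`
with `k > q`, then for every `p ≥ 0`,
`∂(D^p w)/∂x_j^{(q+p)} = ∂w/∂x_j^{(q)}`. -/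
theorem stmt3 {n : ℕ} (w : DPoly n) (j : Fin n) (q : ℕ)
    (hq : ∀ k, q < k → pderiv (some (j, k)) w = 0) :
    ∀ p : ℕ, pderiv (some (j, q + p)) (Dop^[p] w) = pderiv (some (j, q)) w := by
  rw [Dop_eq_totalDeriv]
  intro p
  induction p with
  | zero => rfl
  | succ p ih =>
    rw [Function.iterate_succ_apply', ← add_assoc, pderiv_succ_totalDeriv,
      pderiv_totalDeriv_iterate_eq_zero hq p _ (by omega), map_zero, zero_add, ih]
end

section
/- With the differential-algebra setting of Griewank's Lemma: if w depends on x_j only through derivatives of order ≤ q, then for 0 ≤ r ≤ p, ∂w^{(p)}/∂x_j^{(q+r)} may be nonzero only for appropriate shifts, and in particular w^{(p)} depends on x_j only through derivatives x_j^{(k)} with k ≤ q + p. -/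
open MvPolynomial

/-! The commutator of `∂/∂x_j^{(k+1)}` with `D` is `∂/∂x_j^{(k)}`, i.e.
`∂_{k+1}(D w) = D(∂_{k+1} w) + ∂_k w`; being an identity between derivations, it only has to be
checked on the variables. Induction on `p` then shows that each application of `D` raises the
order beyond which the `x_j`-derivatives vanish by exactly one. -/

theorem MvPolynomial.lie_pderiv_mkDerivation {R σ : Type*} [CommRing R] (i : σ)
    (f : σ → MvPolynomial σ R) :
    ⁅(pderiv i : Derivation R (MvPolynomial σ R) (MvPolynomial σ R)), mkDerivation R f⁆ =
      mkDerivation R fun v => pderiv i (f v) := by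
  classical
  refine derivation_ext fun v => ?_
  rw [Derivation.commutator_apply, mkDerivation_X, mkDerivation_X, pderiv_X, Pi.single_apply]
  split_ifs <;> simp

noncomputable def totalDerivation (n : ℕ) : Derivation ℝ (DPoly n) (DPoly n) :=
  mkDerivation ℝ fun v : Option (Fin n × ℕ) =>
    match v with
    | none => (1 : DPoly n)
    | some (j, k) => Xv j (k + 1)

theorem coe_totalDerivation (n : ℕ) : ⇑(totalDerivation n) = Dop := rfl

theorem lie_pderiv_succ_totalDerivation {n : ℕ} (j : Fin n) (k : ℕ) :
    ⁅(pderiv (some (j, k + 1)) : Derivation ℝ (DPoly n) (DPoly n)), totalDerivation n⁆ =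
      pderiv (some (j, k)) := by
  classical
  rw [totalDerivation, lie_pderiv_mkDerivation, pderiv_def]
  congr 1
  funext v
  rcases v with _ | ⟨i, m⟩ <;> simp [Xv, Pi.single_apply]

theorem pderiv_succ_Dop {n : ℕ} (j : Fin n) (k : ℕ) (w : DPoly n) :
    pderiv (some (j, k + 1)) (Dop w) =
      Dop (pderiv (some (j, k + 1)) w) + pderiv (some (j, k)) w := by
  have h := congr($(lie_pderiv_succ_totalDerivation j k) w)
  rw [Derivation.commutator_apply, coe_totalDerivation] at h
  rw [← h, add_sub_cancel]

/-- If `w` depends on `x_j` only through derivatives of order `≤ q`, then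
`D^p w` depends on `x_j` only through derivatives of order `≤ q + p`. -/
theorem stmt4 {n : ℕ} (w : DPoly n) (j : Fin n) (q : ℕ)
    (hq : ∀ k, q < k → pderiv (some (j, k)) w = 0) :
    ∀ p k : ℕ, q + p < k → pderiv (some (j, k)) (Dop^[p] w) = 0 := by
  intro p
  induction p with
  | zero => intro k hk; simpa using hq k (by omega)
  | succ p ih =>
      intro k hk
      obtain ⟨m, rfl⟩ : ∃ m, k = m + 1 := ⟨k - 1, by omega⟩
      rw [Function.iterate_succ_apply', pderiv_succ_Dop, ih (m + 1) (by omega), ih m (by omega),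
        ← coe_totalDerivation, map_zero, add_zero]
end

section
/- In the LC conversion, if u_l is never zero on the interval of interest, then the original equation can be recovered as f_l = (f̄_l - Σ_{i∈I, i≠l} u_i f_i^{(c_i-θ)}) / u_l; hence any solution of the converted system (f_1,…,f̄_l,…,f_n) = 0 with u_l ≠ 0 is a solution of the original system (f_1,…,f_l,…,f_n) = 0, and conversely. -/
open MvPolynomial

/-- `hod w j`: the highest order of a derivative of `x_j` occurring in `w`
(`⊥` = `-∞` if `x_j` does not occur). This is the signature entry `σ_{ij}`
when `w = f i`. -/
noncomputable def hod {n : ℕ} (w : DPoly n) (j : Fin n) : WithBot ℤ :=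
  w.vars.sup fun v =>
    match v with
    | some (j', k) => if j' = j then ((k : ℤ) : WithBot ℤ) else ⊥
    | none => ⊥

/-- The System Jacobian: `J i j = ∂f_i/∂x_j^{(d_j - c_i)}` (which is `0`
when `d j - c i > σ_{ij}`), and `0` when `d j - c i < 0`. -/
noncomputable def sysJac {n : ℕ} (f : Fin n → DPoly n) (c d : Fin n → ℕ) :
    Matrix (Fin n) (Fin n) (DPoly n) :=
  fun i j => if c i ≤ d j then pderiv (some (j, d j - c i)) (f i) else 0

/-- `φ` is a (formal, Taylor-coefficient) solution point of the system `g = 0`: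
all total derivatives of all equations vanish when evaluated at `φ`. -/
def IsSolPt {n m : ℕ} (φ : Option (Fin n × ℕ) → ℝ) (g : Fin m → DPoly n) : Prop :=
  ∀ i, ∀ p : ℕ, MvPolynomial.eval φ (Dop^[p] (g i)) = 0

/-!
Call `b` flat at `φ` if every total derivative of `b` vanishes at `φ`; a point solves a system
iff every equation is flat there. Flatness is preserved by sums, derivatives and multiplication
by arbitrary `a` (Leibniz rule). Conversely, if `a * b` is flat and `a(φ) ≠ 0`, then `b` is flat
by strong induction on the order: `(D^p (a * b))(φ)` is `a(φ) · (D^p b)(φ)` plus terms involving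
only lower derivatives of `b`. Since `f̄_l = u_l f_l + ∑_{i ≠ l} u_i D^{c_i - θ} f_i` and the sum is
flat along a solution of either system, `f̄_l` is flat iff `u_l f_l` is, iff `f_l` is.
-/

namespace Derivation

variable {R A S : Type*} [CommSemiring R] [CommRing A] [Algebra R A] [CommRing S]
  (D : Derivation R A A) (ev : A →+* S)

def IsFlat (b : A) : Prop := ∀ p : ℕ, ev (D^[p] b) = 0

variable {D ev}

theorem iterate_eq_coe_pow (p : ℕ) : (⇑D)^[p] = ⇑(D.toLinearMap ^ p) :=
  (Module.End.coe_pow D.toLinearMap p).symm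

theorem eval_iterate_mul_of_forall_lt {p : ℕ} (a : A) {b : A}
    (hb : ∀ q < p, ev (D^[q] b) = 0) : ev (D^[p] (a * b)) = ev a * ev (D^[p] b) := by
  induction p generalizing a b with
  | zero => simp
  | succ p ih =>
    have hsplit : D^[p + 1] (a * b) = D^[p] (a * D b) + D^[p] (D a * b) := by
      rw [Function.iterate_succ_apply, leibniz, smul_eq_mul, smul_eq_mul, mul_comm b,
        iterate_eq_coe_pow, map_add]
    have hDb : ∀ q < p, ev (D^[q] (D b)) = 0 := fun q hq => by
      rw [← Function.iterate_succ_apply]; exact hb (q + 1) (by omega)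
    rw [hsplit, map_add, ih a hDb, ih (D a) fun q hq => hb q (by omega), hb p (by omega),
      ← Function.iterate_succ_apply, mul_zero, add_zero]

theorem IsFlat.mul_left {b : A} (hb : IsFlat D ev b) (a : A) : IsFlat D ev (a * b) :=
  fun p => by rw [eval_iterate_mul_of_forall_lt a fun q _ => hb q, hb p, mul_zero]

theorem IsFlat.iterate {b : A} (hb : IsFlat D ev b) (k : ℕ) : IsFlat D ev (D^[k] b) :=
  fun p => by rw [← Function.iterate_add_apply]; exact hb (p + k)

theorem IsFlat.sum {ι : Type*} {s : Finset ι} {g : ι → A} (hg : ∀ i ∈ s, IsFlat D ev (g i)) :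
    IsFlat D ev (∑ i ∈ s, g i) :=
  fun p => by
    rw [iterate_eq_coe_pow, map_sum, map_sum]
    exact Finset.sum_eq_zero fun i hi => by rw [← iterate_eq_coe_pow]; exact hg i hi p

theorem isFlat_add_iff_left {a b : A} (hb : IsFlat D ev b) :
    IsFlat D ev (a + b) ↔ IsFlat D ev a := by
  refine forall_congr' fun p => ?_
  rw [iterate_eq_coe_pow, map_add, map_add, ← iterate_eq_coe_pow, hb p, add_zero]

theorem isFlat_mul_iff_right [NoZeroDivisors S] {a b : A} (ha : ev a ≠ 0) :
    IsFlat D ev (a * b) ↔ IsFlat D ev b := by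
  refine ⟨fun hab p => ?_, fun hb => hb.mul_left a⟩
  induction p using Nat.strong_induction_on with
  | _ p ih =>
    have h := eval_iterate_mul_of_forall_lt (D := D) (ev := ev) a ih
    rw [hab p, eq_comm, mul_eq_zero] at h
    exact h.resolve_left ha

end Derivation

open Derivation in
theorem stmt7_general {n : ℕ} (f u : Fin n → DPoly n) (c : Fin n → ℕ)
    (θ : ℕ)
    (l : Fin n) (hcl : c l = θ)
    (φ : Option (Fin n × ℕ) → ℝ)
    (hφ : MvPolynomial.eval φ (u l) ≠ 0) :
    u l * f l = (∑ i, u i * Dop^[c i - θ] (f i))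
        - ∑ i ∈ Finset.univ.erase l, u i * Dop^[c i - θ] (f i) ∧
    (IsSolPt φ (Function.update f l (∑ i, u i * Dop^[c i - θ] (f i))) ↔
      IsSolPt φ f) := by
  -- `Dop` is by definition the coercion of an `mkDerivation`.
  obtain ⟨D, hD⟩ : ∃ D : Derivation ℝ (DPoly n) (DPoly n), ⇑D = Dop := ⟨_, rfl⟩
  have hsplit : ∑ i, u i * Dop^[c i - θ] (f i) =
      u l * f l + ∑ i ∈ Finset.univ.erase l, u i * Dop^[c i - θ] (f i) := by
    rw [← Finset.add_sum_erase _ _ (Finset.mem_univ l), hcl, Nat.sub_self]; rfl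
  refine ⟨eq_sub_of_add_eq hsplit.symm, ?_⟩
  have hsol (g : Fin n → DPoly n) : IsSolPt φ g ↔ ∀ i, D.IsFlat (eval φ) (g i) := by
    simp only [IsSolPt, IsFlat, hD]
  have hrest (h : ∀ i ≠ l, D.IsFlat (eval φ) (f i)) :
      D.IsFlat (eval φ) (∑ i ∈ Finset.univ.erase l, u i * Dop^[c i - θ] (f i)) :=
    IsFlat.sum fun i hi => hD ▸ ((h i (Finset.ne_of_mem_erase hi)).iterate _).mul_left _
  rw [hsol, hsol, Function.forall_update_iff f fun _ g => D.IsFlat (eval φ) g, hsplit]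
  constructor
  · rintro ⟨hl, hne⟩ i
    rcases eq_or_ne i l with rfl | hi
    · exact (isFlat_mul_iff_right hφ).1 ((isFlat_add_iff_left (hrest hne)).1 hl)
    · exact hne i hi
  · intro h
    exact ⟨(isFlat_add_iff_left (hrest fun i _ => h i)).2 ((h l).mul_left _), fun i _ => h i⟩

/-- **Recovery/equivalence for the LC conversion.** With `l ∈ I`, `c l = θ`,
the replaced equation satisfies
`u l * f l = f̄ - ∑_{i ≠ l} u i · f i^{(c i - θ)}`; consequently, at any point
`φ` where `u l` does not vanish, `φ` is a (formal) solution of the converted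
system iff it is a (formal) solution of the original system. -/
theorem stmt7 {n : ℕ} (f u : Fin n → DPoly n) (c : Fin n → ℕ)
    (θ : ℕ)
    (hθ1 : ∀ i, u i ≠ 0 → θ ≤ c i)
    (hθ2 : ∃ i, u i ≠ 0 ∧ c i = θ)
    (l : Fin n) (hul : u l ≠ 0) (hcl : c l = θ)
    (φ : Option (Fin n × ℕ) → ℝ)
    (hφ : MvPolynomial.eval φ (u l) ≠ 0) :
    u l * f l = (∑ i, u i * Dop^[c i - θ] (f i))
        - ∑ i ∈ Finset.univ.erase l, u i * Dop^[c i - θ] (f i) ∧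
    (IsSolPt φ (Function.update f l (∑ i, u i * Dop^[c i - θ] (f i))) ↔
      IsSolPt φ f) :=
  stmt7_general f u c θ l hcl φ hφ
end
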